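/- arXiv:2203.02948 — 2 statements merged into one kernel-verified Lean document; each statement's English description precedes it below -/
import Mathlib

section
/- Fix Ī ∈ ℝ and T_n > 0. For every v ∈ (Ē_K, Ē_Na), every h ∈ ℝ, and every n > 0 such that V(v, m_∞(v), h, n) = 0, one has N(v,n) = 0 if and only if V(v, m_∞(v), h, n_∞(v)) = 0. (That is, on the critical manifold {V(v,m_∞(v),h,n) = 0} with n > 0, the equilibrium set of the intermediate layer problem n-wise coincides with the set defined by V(v,m_∞(v),h,n_∞(v)) = 0.) -/
open Real Set Filter

noncomputable section

/-- Nernst potential of sodium (rescaled). -/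
def ENa : ℝ := 0.5
/-- Nernst potential of potassium (rescaled). -/
def EK : ℝ := -0.77
/-- Nernst potential of the leak current (rescaled). -/
def EL : ℝ := -0.544
/-- Rescaled potassium conductance. -/
def gK : ℝ := 0.3
/-- Rescaled leak conductance. -/
def gL : ℝ := 0.0025

/-- The right-hand side of the fast voltage equation. -/
def V (I v m h n : ℝ) : ℝ :=
  I - (v - ENa) * m ^ 3 * h - gK * (v - EK) * n ^ 4 - gL * (v - EL)

def αm (v : ℝ) : ℝ := ((v + 40) / 10) / (1 - Real.exp (-(v + 40) / 10))
def βm (v : ℝ) : ℝ := 4 * Real.exp (-(v + 65) / 18)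
def αh (v : ℝ) : ℝ := (7 / 100) * Real.exp (-(v + 65) / 20)
def βh (v : ℝ) : ℝ := 1 / (1 + Real.exp (-(v + 35) / 10))
def αn (v : ℝ) : ℝ := ((v + 55) / 100) / (1 - Real.exp (-(v + 55) / 10))
def βn (v : ℝ) : ℝ := (1 / 4) * Real.exp (-(v + 65) / 80)

def minf (v : ℝ) : ℝ := αm v / (αm v + βm v)
def hinf (v : ℝ) : ℝ := αh v / (αh v + βh v)
def ninf (v : ℝ) : ℝ := αn v / (αn v + βn v)
def tmhat (v : ℝ) : ℝ := 1 / (αm v + βm v)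
def thhat (v : ℝ) : ℝ := 1 / (αh v + βh v)
def tnhat (v : ℝ) : ℝ := 1 / (αn v + βn v)

/-- The real, sign-preserving cube root: `cbrt s = sign s * |s| ^ (1/3)`. -/
def cbrt (s : ℝ) : ℝ := Real.sign s * |s| ^ ((1 : ℝ) / 3)

/-- Graph representation `m = μ(v,h,n)` of the critical manifold. -/
def μfun (I v h n : ℝ) : ℝ :=
  cbrt ((I - gK * (v - EK) * n ^ 4 - gL * (v - EL)) / ((v - ENa) * h))

/-- Graph representation `h = η(v,n)` of the two-dimensional critical manifold. -/
def ηfun (I v n : ℝ) : ℝ :=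
  (I - gK * (v - EK) * n ^ 4 - gL * (v - EL)) / ((v - ENa) * (minf v) ^ 3)

/-- Graph representation `n = ν(v,h)` of the two-dimensional critical manifold
(nonnegative real fourth root). -/
def νfun (I v h : ℝ) : ℝ :=
  ((I - (v - ENa) * (minf v) ^ 3 * h - gL * (v - EL)) / (gK * (v - EK))) ^ ((1 : ℝ) / 4)

/-- `H(v,h) = (h_∞(v) - h)/(T_h · t̂_h(v))`. -/
def Hfun (Th v h : ℝ) : ℝ := (hinf v - h) / (Th * thhat v)

/-- `N(v,n) = (n_∞(v) - n)/(T_n · t̂_n(v))`. -/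
def Nfun (Tn v n : ℝ) : ℝ := (ninf v - n) / (Tn * tnhat v)

/-- on the critical manifold `{V(v,m_∞(v),h,n) = 0}` with `n > 0`,
`N(v,n) = 0` iff `V(v, m_∞(v), h, n_∞(v)) = 0`. -/
theorem stmt10 (I Tn : ℝ) (hTn : 0 < Tn) (v h n : ℝ) (hv : v ∈ Set.Ioo EK ENa)
    (hn : 0 < n) (hcrit : V I v (minf v) h n = 0) :
    Nfun Tn v n = 0 ↔ V I v (minf v) h (ninf v) = 0 := by
  obtain ⟨hv1, hv2⟩ := hv
  rw [EK] at hv1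
  have hαn : 0 < αn v := by
    rw [αn]
    have h1 : 0 < (v + 55) / 100 := by norm_num; linarith
    have h2 : Real.exp (-(v + 55) / 10) < 1 := by
      rw [Real.exp_lt_one_iff]
      norm_num; linarith
    exact div_pos h1 (by linarith)
  have hβn : 0 < βn v := by
    rw [βn]; positivity
  have hsum : 0 < αn v + βn v := by linarith
  have hninf : 0 < ninf v := div_pos hαn hsum
  have htn : 0 < tnhat v := by rw [tnhat]; positivity
  have hden : Tn * tnhat v ≠ 0 := by positivity
  have hgap : V I v (minf v) h (ninf v) = gK * (v - EK) * (n ^ 4 - (ninf v) ^ 4) := by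
    have : V I v (minf v) h (ninf v) - V I v (minf v) h n
        = gK * (v - EK) * (n ^ 4 - (ninf v) ^ 4) := by
      simp only [V]; ring
    rw [hcrit] at this; linarith
  have hvEK : 0 < v - EK := by rw [EK]; linarith
  have hgK : (0:ℝ) < gK := by rw [gK]; norm_num
  constructor
  · intro hN
    have hne : ninf v - n = 0 := by
      have := hN
      rw [Nfun, div_eq_zero_iff] at this
      tauto
    rw [hgap, show n = ninf v by linarith]
    ring
  · intro hV
    rw [hgap] at hV
    have h4 : n ^ 4 - (ninf v) ^ 4 = 0 := by
      have hne : gK * (v - EK) ≠ 0 := by positivity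
      exact (mul_eq_zero.mp hV).resolve_left hne
    have hfac : (n - ninf v) * ((n + ninf v) * (n ^ 2 + (ninf v) ^ 2)) = 0 := by
      linear_combination h4
    have hne : n = ninf v := by
      rcases mul_eq_zero.mp hfac with h' | h'
      · linarith
      · have : 0 < (n + ninf v) * (n ^ 2 + (ninf v) ^ 2) := by positivity
        linarith
    rw [Nfun, hne, sub_self, zero_div]
end
end

section
/- Fix Ī ∈ ℝ, δ_h, δ_n ∈ ℝ, T_h, T_n > 0, and t₀ ∈ ℝ. Let v, h, n : ℝ → ℝ be differentiable at t₀ with v(t₀) ∈ (Ē_K, Ē_Na), h'(t₀) = δ_h·H(v(t₀),h(t₀)), n'(t₀) = δ_n·N(v(t₀),n(t₀)), and suppose V(v(t), m_∞(v(t)), h(t), n(t)) = 0 for all t in a neighbourhood of t₀. Let D denote the derivative at v(t₀) of the map w ↦ V(w, m_∞(w), h(t₀), n(t₀)). Then D·v'(t₀) = (v(t₀) − Ē_Na)·m_∞(v(t₀))³·δ_h·H(v(t₀),h(t₀)) + 4·ḡ_K·(v(t₀) − Ē_K)·n(t₀)³·δ_n·N(v(t₀),n(t₀)). -/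
open Real Set Filter

noncomputable section

/-!
Writing `V(w, m(w), h, n) = V(w, m(w), h₀, n₀) - (w - E_Na) m(w)³ (h - h₀) - ḡ_K (w - E_K) (n⁴ - n₀⁴)`
with `h₀ = h(t₀)`, `n₀ = n(t₀)`, the last two products vanish at `t₀` along the trajectory, so
the product rule leaves only their first factors times `h'(t₀)` and `4 n₀³ n'(t₀)`.
Differentiating the constraint then gives the identity; the only analytic input is that
`m_∞` is differentiable away from the removable singularity of `α_m` at `v = -40`.
-/

lemma one_sub_exp_ne_zero {x : ℝ} (hx : x ≠ 0) : 1 - Real.exp x ≠ 0 := by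
  rw [sub_ne_zero, ne_comm, Ne, Real.exp_eq_one_iff]
  exact hx

lemma αm_pos {v : ℝ} (hv : v ≠ -40) : 0 < αm v := by
  unfold αm
  rcases lt_or_gt_of_ne hv with hlt | hgt
  · apply div_pos_of_neg_of_neg (by linarith)
    rw [sub_neg, Real.one_lt_exp_iff]
    linarith
  · apply div_pos (by linarith)
    rw [sub_pos, Real.exp_lt_one_iff]
    linarith

lemma differentiableAt_αm {v : ℝ} (hv : v ≠ -40) : DifferentiableAt ℝ αm v := by
  unfold αm
  refine DifferentiableAt.div (by fun_prop) (by fun_prop) (one_sub_exp_ne_zero ?_)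
  intro h
  exact hv (by linarith)

lemma differentiableAt_minf {v : ℝ} (hv : v ≠ -40) : DifferentiableAt ℝ minf v := by
  have hβm : 0 < βm v := by unfold βm; positivity
  have hαm : DifferentiableAt ℝ αm v := differentiableAt_αm hv
  have hβm' : DifferentiableAt ℝ βm v := by unfold βm; fun_prop
  exact hαm.div (hαm.add hβm') (add_pos (αm_pos hv) hβm).ne'

lemma V_eq_V_sub (I w m h n h₀ n₀ : ℝ) :
    V I w m h n = V I w m h₀ n₀ - (w - ENa) * m ^ 3 * (h - h₀) - gK * (w - EK) * (n ^ 4 - n₀ ^ 4) := by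
  unfold V
  ring

lemma HasDerivAt.mul_of_right_eq_zero {p q : ℝ → ℝ} {p' q' x : ℝ} (hp : HasDerivAt p p' x)
    (hq : HasDerivAt q q' x) (hqx : q x = 0) : HasDerivAt (fun y => p y * q y) (p x * q') x := by
  simpa [hqx] using hp.fun_mul hq

theorem deriv_V_mul_deriv_eq {I t₀ : ℝ} {m fv fh fn : ℝ → ℝ}
    (hm : DifferentiableAt ℝ m (fv t₀)) (hfv : DifferentiableAt ℝ fv t₀)
    (hfh : DifferentiableAt ℝ fh t₀) (hfn : DifferentiableAt ℝ fn t₀)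
    (hconstr : ∀ᶠ t in nhds t₀, V I (fv t) (m (fv t)) (fh t) (fn t) = 0) :
    deriv (fun w => V I w (m w) (fh t₀) (fn t₀)) (fv t₀) * deriv fv t₀ =
      (fv t₀ - ENa) * m (fv t₀) ^ 3 * deriv fh t₀ +
        4 * gK * (fv t₀ - EK) * fn t₀ ^ 3 * deriv fn t₀ := by
  set g := fun w => V I w (m w) (fh t₀) (fn t₀)
  have hg : HasDerivAt g (deriv g (fv t₀)) (fv t₀) := by
    refine DifferentiableAt.hasDerivAt ?_
    unfold g V
    fun_prop
  have hNa : HasDerivAt (fun t => (fv t - ENa) * m (fv t) ^ 3 * (fh t - fh t₀))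
      ((fv t₀ - ENa) * m (fv t₀) ^ 3 * deriv fh t₀) t₀ :=
    HasDerivAt.mul_of_right_eq_zero
      ((hfv.sub_const ENa).mul ((hm.comp t₀ hfv).pow 3)).hasDerivAt
      (hfh.hasDerivAt.sub_const _) (sub_self _)
  have hK : HasDerivAt (fun t => gK * (fv t - EK) * (fn t ^ 4 - fn t₀ ^ 4))
      (gK * (fv t₀ - EK) * (4 * fn t₀ ^ 3 * deriv fn t₀)) t₀ := by
    refine HasDerivAt.mul_of_right_eq_zero
      ((hfv.sub_const EK).const_mul gK).hasDerivAt ?_ (sub_self _)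
    simpa using (hfn.hasDerivAt.pow 4).sub_const (fn t₀ ^ 4)
  have hΦ : HasDerivAt (fun t => V I (fv t) (m (fv t)) (fh t) (fn t))
      (deriv g (fv t₀) * deriv fv t₀ - (fv t₀ - ENa) * m (fv t₀) ^ 3 * deriv fh t₀
        - gK * (fv t₀ - EK) * (4 * fn t₀ ^ 3 * deriv fn t₀)) t₀ := by
    rw [show (fun t => V I (fv t) (m (fv t)) (fh t) (fn t)) = fun t => g (fv t)
        - (fv t - ENa) * m (fv t) ^ 3 * (fh t - fh t₀) - gK * (fv t - EK) * (fn t ^ 4 - fn t₀ ^ 4)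
      from funext fun t => V_eq_V_sub I _ _ _ _ (fh t₀) (fn t₀)]
    exact ((hg.comp t₀ hfv.hasDerivAt).sub hNa).sub hK
  have hΦ0 : deriv (fun t => V I (fv t) (m (fv t)) (fh t) (fn t)) t₀ = 0 := by
    simpa using Filter.EventuallyEq.deriv_eq hconstr
  rw [hΦ.deriv] at hΦ0
  linear_combination hΦ0

theorem stmt12_general (I δh δn Th Tn t₀ : ℝ)
    (fv fh fn : ℝ → ℝ)
    (hfv : DifferentiableAt ℝ fv t₀) (hfh : DifferentiableAt ℝ fh t₀)
    (hfn : DifferentiableAt ℝ fn t₀)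
    (hv : fv t₀ ∈ Set.Ioo EK ENa)
    (hdh : deriv fh t₀ = δh * Hfun Th (fv t₀) (fh t₀))
    (hdn : deriv fn t₀ = δn * Nfun Tn (fv t₀) (fn t₀))
    (hconstr : ∀ᶠ t in nhds t₀, V I (fv t) (minf (fv t)) (fh t) (fn t) = 0) :
    deriv (fun w => V I w (minf w) (fh t₀) (fn t₀)) (fv t₀) * deriv fv t₀ =
      (fv t₀ - ENa) * (minf (fv t₀)) ^ 3 * (δh * Hfun Th (fv t₀) (fh t₀)) +
        4 * gK * (fv t₀ - EK) * (fn t₀) ^ 3 * (δn * Nfun Tn (fv t₀) (fn t₀)) := by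
  have hv40 : fv t₀ ≠ -40 := by
    have := hv.1
    norm_num [EK] at this
    linarith
  rw [← hdh, ← hdn]
  exact deriv_V_mul_deriv_eq (differentiableAt_minf hv40) hfv hfh hfn hconstr

/-- implicit differentiation of the constraint
`V(v(t), m_∞(v(t)), h(t), n(t)) = 0` along the reduced flow on the critical manifold. -/
theorem stmt12 (I δh δn Th Tn t₀ : ℝ) (hTh : 0 < Th) (hTn : 0 < Tn)
    (fv fh fn : ℝ → ℝ)
    (hfv : DifferentiableAt ℝ fv t₀) (hfh : DifferentiableAt ℝ fh t₀)
    (hfn : DifferentiableAt ℝ fn t₀)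
    (hv : fv t₀ ∈ Set.Ioo EK ENa)
    (hdh : deriv fh t₀ = δh * Hfun Th (fv t₀) (fh t₀))
    (hdn : deriv fn t₀ = δn * Nfun Tn (fv t₀) (fn t₀))
    (hconstr : ∀ᶠ t in nhds t₀, V I (fv t) (minf (fv t)) (fh t) (fn t) = 0) :
    deriv (fun w => V I w (minf w) (fh t₀) (fn t₀)) (fv t₀) * deriv fv t₀ =
      (fv t₀ - ENa) * (minf (fv t₀)) ^ 3 * (δh * Hfun Th (fv t₀) (fh t₀)) +
        4 * gK * (fv t₀ - EK) * (fn t₀) ^ 3 * (δn * Nfun Tn (fv t₀) (fn t₀)) :=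
  stmt12_general I δh δn Th Tn t₀ fv fh fn hfv hfh hfn hv hdh hdn hconstr
end
end
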